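/- Let a_1, …, a_M be points in ℝ² with M ≥ 4 and no three of them collinear, and fix an integer i ≥ 2. Then the set of tuples (p_1, …, p_i) ∈ (ℝ²)^i whose entries are pairwise distinct and for which there exists a set X^G ⊆ ℝ² with |X^G| = i, X^G ∩ {p_1, …, p_i} = ∅, and D_m(X^G) = D_m({p_1, …, p_i}) for every m = 1, …, M, has Lebesgue measure zero in (ℝ²)^i ≅ ℝ^{2i}. -/

import Mathlib

/-!
A ghost point `q` outside the targets must, for each BS `m`, have the range of some target
`p (j m)`. If three BSs are matched to the same target, `q` is that target, since a point of the
plane is determined by its distances to three non-collinear points. Otherwise, as `M ≥ 4`, some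
BS `m₀` is matched to a target `w` while two other BSs are matched to targets other than `w`.
These two constraints put `q` on the intersection of two circles, which is finite and depends only
on the coordinates other than `w`, and then `p w` lies on one of finitely many circles about
`a m₀`. So every slice in the coordinate `w` is null, and Fubini concludes for each of the
finitely many assignments `j`.
-/

open MeasureTheory

noncomputable section

/-- The Euclidean plane ℝ². -/
abbrev Plane := EuclideanSpace ℝ (Fin 2)

/-- The range set of a BS located at `a` with respect to a target set `X`:
the set of distances from `a` to the points of `X`. -/
def rangeSet (a : Plane) (X : Set Plane) : Set ℝ := (fun p => dist a p) '' X

open EuclideanGeometry AffineSubspace Metric Set Module Function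

section Geometry

variable {V P : Type*} [NormedAddCommGroup V] [InnerProductSpace ℝ V] [FiniteDimensional ℝ V]
  [MetricSpace P] [NormedAddTorsor V P]

theorem collinear_perpBisector (hd : finrank ℝ V = 2) {p₁ p₂ : P} (h : p₁ ≠ p₂) :
    Collinear ℝ (perpBisector p₁ p₂ : Set P) := by
  have : Fact (finrank ℝ V = 1 + 1) := ⟨hd⟩
  rw [collinear_iff_finrank_le_one, ← direction_eq_vectorSpan,
    direction_perpBisector,
    Submodule.finrank_orthogonal_span_singleton (n := 1) (vsub_ne_zero.mpr h.symm)]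

theorem eq_of_dist_eq_of_not_collinear (hd : finrank ℝ V = 2) {a₁ a₂ a₃ q q' : P}
    (ha : ¬ Collinear ℝ ({a₁, a₂, a₃} : Set P)) (h₁ : dist a₁ q = dist a₁ q')
    (h₂ : dist a₂ q = dist a₂ q') (h₃ : dist a₃ q = dist a₃ q') : q = q' := by
  by_contra hne
  refine ha ((collinear_perpBisector hd hne).subset ?_)
  rintro _ (rfl | rfl | rfl) <;> simpa [mem_perpBisector_iff_dist_eq]

theorem finite_setOf_dist_eq_and_dist_eq (hd : finrank ℝ V = 2) {c₁ c₂ : P} (hc : c₁ ≠ c₂)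
    (r₁ r₂ : ℝ) : {q : P | dist c₁ q = r₁ ∧ dist c₂ q = r₂}.Finite := by
  set K := {q : P | dist c₁ q = r₁ ∧ dist c₂ q = r₂}
  by_cases hK : K.Subsingleton
  · exact hK.finite
  obtain ⟨q₁, hq₁, q₂, hq₂, hne⟩ := Set.not_subsingleton_iff.mp hK
  refine (Set.toFinite {q₁, q₂}).subset fun q hq => ?_
  simp only [K, dist_comm c₁, dist_comm c₂] at hq₁ hq₂ hq
  exact eq_of_dist_eq_of_dist_eq_of_finrank_eq_two hd hc hne hq₁.1 hq₂.1 hq.1 hq₁.2 hq₂.2 hq.2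

end Geometry

theorem MeasureTheory.Measure.pi_null_of_forall_update_null {ι : Type*} [Fintype ι]
    [DecidableEq ι] {X : ι → Type*} [∀ k, MeasurableSpace (X k)] (μ : ∀ k, Measure (X k))
    [∀ k, SigmaFinite (μ k)] (w : ι) {U : Set (∀ k, X k)} (hU : MeasurableSet U)
    (h : ∀ p, μ w (update p w ⁻¹' U) = 0) : Measure.pi μ U = 0 := by
  have hslice : (fun p => ∫⁻ x, U.indicator 1 (update p w x) ∂μ w) = 0 := by
    funext p
    rw [Pi.zero_apply, ← h p, ← lintegral_indicator_one (measurable_update p hU)]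
    rfl
  have hf : Measurable (U.indicator (1 : (∀ k, X k) → ENNReal)) := measurable_one.indicator hU
  obtain rfl | ⟨p₀, -⟩ := U.eq_empty_or_nonempty
  · exact measure_empty
  rw [← lintegral_indicator_one hU, lintegral_eq_lmarginal_univ p₀,
    lmarginal_erase' _ hf (Finset.mem_univ w), hslice]
  simp [lmarginal]

theorem IsClosed.measurableSet_image_of_continuous {X Y : Type*} [TopologicalSpace X]
    [SigmaCompactSpace X] [TopologicalSpace Y] [T2Space Y] [MeasurableSpace Y] [BorelSpace Y]
    {f : X → Y} (hf : Continuous f) {C : Set X} (hC : IsClosed C) : MeasurableSet (f '' C) := by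
  obtain ⟨K, hK, hKC⟩ := (isSigmaCompact_univ.of_isClosed_subset hC (subset_univ C)).image hf
  rw [← hKC]
  exact .iUnion fun n => (hK n).measurableSet

section Circles

variable {V : Type*} [NormedAddCommGroup V] [InnerProductSpace ℝ V] [FiniteDimensional ℝ V]
  [MeasurableSpace V] [BorelSpace V]

theorem measure_pi_setOf_exists_dist_eq_eq_zero (hd : finrank ℝ V = 2) (μ : Measure V)
    [μ.IsAddHaarMeasure] {κ : Type*} [Fintype κ] [DecidableEq κ] {c₀ c₂ c₃ : V} (hc : c₂ ≠ c₃)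
    {w u₂ u₃ : κ} (hu₂ : u₂ ≠ w) (hu₃ : u₃ ≠ w) :
    Measure.pi (fun _ => μ) {p : κ → V | ∃ q, dist c₂ q = dist c₂ (p u₂) ∧
      dist c₃ q = dist c₃ (p u₃) ∧ dist c₀ q = dist c₀ (p w)} = 0 := by
  have : Nontrivial V := Module.nontrivial_of_finrank_eq_succ hd
  set C := {pq : (κ → V) × V | dist c₂ pq.2 = dist c₂ (pq.1 u₂) ∧
      dist c₃ pq.2 = dist c₃ (pq.1 u₃) ∧ dist c₀ pq.2 = dist c₀ (pq.1 w)}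
  have hC : IsClosed C := by
    refine (isClosed_eq ?_ ?_).inter ((isClosed_eq ?_ ?_).inter (isClosed_eq ?_ ?_)) <;> fun_prop
  refine Measure.pi_null_of_forall_update_null _ w ?_ fun p => ?_
  · convert hC.measurableSet_image_of_continuous continuous_fst using 1
    ext p; simp [C]
  set K := {q : V | dist c₂ q = dist c₂ (p u₂) ∧ dist c₃ q = dist c₃ (p u₃)}
  have hK : K.Countable := (finite_setOf_dist_eq_and_dist_eq hd hc _ _).countable
  refine measure_mono_null (t := ⋃ q ∈ K, sphere c₀ (dist c₀ q)) ?_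
    ((measure_biUnion_null_iff hK).mpr fun q _ => Measure.addHaar_sphere μ c₀ _)
  rintro x ⟨q, hq₂, hq₃, hq₀⟩
  simp only [update_of_ne hu₂, update_of_ne hu₃, update_self] at hq₂ hq₃ hq₀
  exact mem_iUnion₂.mpr ⟨q, ⟨hq₂, hq₃⟩, mem_sphere'.mpr hq₀.symm⟩

end Circles

theorem exists_three_eq_or_exists_two_ne {α β : Type*} [Fintype α] [DecidableEq β]
    (f : α → β) (hα : 4 ≤ Fintype.card α) :
    (∃ x y z, x ≠ y ∧ x ≠ z ∧ y ≠ z ∧ f y = f x ∧ f z = f x) ∨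
      ∃ x y z, y ≠ z ∧ f y ≠ f x ∧ f z ≠ f x := by
  obtain ⟨x⟩ : Nonempty α := Fintype.card_pos_iff.mp (by omega)
  have hsplit := Finset.card_filter_add_card_filter_not (s := Finset.univ) (fun y => f y = f x)
  rw [Finset.card_univ] at hsplit
  by_cases hfib : 2 < (Finset.univ.filter fun y => f y = f x).card
  · obtain ⟨x', hx', y, hy, z, hz, hx'y, hx'z, hyz⟩ := Finset.two_lt_card.mp hfib
    simp only [Finset.mem_filter, Finset.mem_univ, true_and] at hx' hy hz
    exact .inl ⟨x', y, z, hx'y, hx'z, hyz, hy.trans hx'.symm, hz.trans hx'.symm⟩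
  · obtain ⟨y, hy, z, hz, hyz⟩ :=
      Finset.one_lt_card.mp (show 1 < (Finset.univ.filter fun y => ¬f y = f x).card by omega)
    simp only [Finset.mem_filter, Finset.mem_univ, true_and] at hy hz
    exact .inr ⟨x, y, z, hyz, hy, hz⟩

section Ghost

variable {ι κ : Type*}

/-- `p` admits a ghost point `q`, not among its entries, which BS `m` cannot tell apart from the
target `p (j m)`. -/
def ghostMatchSet (a : ι → Plane) (j : ι → κ) : Set (κ → Plane) :=
  {p | ∃ q ∉ range p, ∀ m, dist (a m) q = dist (a m) (p (j m))}

theorem mem_iUnion_ghostMatchSet {a : ι → Plane} {p : κ → Plane} {XG : Set Plane}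
    (hXG : XG.Nonempty) (hdisj : XG ∩ range p = ∅)
    (hrange : ∀ m, rangeSet (a m) XG = rangeSet (a m) (range p)) :
    p ∈ ⋃ j, ghostMatchSet a j := by
  obtain ⟨q, hq⟩ := hXG
  have hmatch : ∀ m, ∃ k, dist (a m) q = dist (a m) (p k) := fun m => by
    obtain ⟨_, ⟨k, rfl⟩, hk⟩ : dist (a m) q ∈ rangeSet (a m) (range p) :=
      hrange m ▸ mem_image_of_mem _ hq
    exact ⟨k, hk.symm⟩
  choose j hj using hmatch
  exact mem_iUnion.mpr ⟨j, q, fun hqp => hdisj.subset ⟨hq, hqp⟩, hj⟩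

theorem ghostMatchSet_eq_empty {a : ι → Plane} {j : ι → κ} {m₁ m₂ m₃ : ι}
    (ha : ¬ Collinear ℝ ({a m₁, a m₂, a m₃} : Set Plane)) (h₂ : j m₂ = j m₁)
    (h₃ : j m₃ = j m₁) : ghostMatchSet a j = ∅ := by
  refine eq_empty_of_forall_notMem fun p ⟨q, hq, hdist⟩ => hq ⟨j m₁, ?_⟩
  refine (eq_of_dist_eq_of_not_collinear finrank_euclideanSpace_fin ha (hdist m₁) ?_ ?_).symm
  · simpa [h₂] using hdist m₂
  · simpa [h₃] using hdist m₃

theorem volume_ghostMatchSet [Fintype κ] [DecidableEq κ] {a : ι → Plane} {j : ι → κ}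
    {m₀ m₂ m₃ : ι} (ha : ¬ Collinear ℝ ({a m₀, a m₂, a m₃} : Set Plane)) (h₂ : j m₂ ≠ j m₀)
    (h₃ : j m₃ ≠ j m₀) : volume (ghostMatchSet a j) = 0 := by
  refine measure_mono_null ?_ (measure_pi_setOf_exists_dist_eq_eq_zero finrank_euclideanSpace_fin
    volume (c₀ := a m₀) (ne₂₃_of_not_collinear ha) h₂ h₃)
  rintro p ⟨q, -, hdist⟩
  exact ⟨q, hdist m₂, hdist m₃, hdist m₀⟩

end Ghost

/-- **Appendix A: Pr(E_i^{(r)}) = 0.** If `M ≥ 4` and no three BSs are collinear, then for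
each `i ≥ 2`, the set of tuples of `i` pairwise distinct target positions that admit a ghost
configuration disjoint from them has Lebesgue measure zero in `(ℝ²)^i`. -/
theorem ghost_event_measure_zero (M : ℕ) (hM : 4 ≤ M) (a : Fin M → Plane)
    (hcol : ∀ i j k : Fin M, i ≠ j → i ≠ k → j ≠ k →
      ¬ Collinear ℝ ({a i, a j, a k} : Set Plane))
    (i : ℕ) (hi : 2 ≤ i) :
    volume {p : Fin i → Plane | Function.Injective p ∧
      ∃ XG : Set Plane, XG.Finite ∧ XG.ncard = i ∧
        XG ∩ Set.range p = ∅ ∧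
        ∀ m : Fin M, rangeSet (a m) XG = rangeSet (a m) (Set.range p)} = 0 := by
  refine measure_mono_null (fun p ⟨_, XG, _, hcard, hdisj, hrange⟩ =>
    mem_iUnion_ghostMatchSet (nonempty_of_ncard_ne_zero (by omega)) hdisj hrange)
    (measure_iUnion_null fun j => ?_)
  rcases exists_three_eq_or_exists_two_ne j (by simpa using hM) with
    ⟨m₁, m₂, m₃, h₁₂, h₁₃, h₂₃, e₂, e₃⟩ | ⟨m₀, m₂, m₃, h₂₃, e₂, e₃⟩
  · rw [ghostMatchSet_eq_empty (hcol m₁ m₂ m₃ h₁₂ h₁₃ h₂₃) e₂ e₃]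
    exact measure_empty
  · have h₀₂ : m₀ ≠ m₂ := fun h => e₂ (h ▸ rfl)
    have h₀₃ : m₀ ≠ m₃ := fun h => e₃ (h ▸ rfl)
    exact volume_ghostMatchSet (hcol m₀ m₂ m₃ h₀₂ h₀₃ h₂₃) e₂ e₃
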